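/- Let 𝒜 generate a monoid of Northcott type with exponents u_{ij} > 0 as in the matrix Φ. Then the catenary degree of ℕ𝒜 equals max( max{u_{n1}+u_{21}, u_{1,n-1}+u_{1n}}, max{u_{n2}+u_{32}, u_{21}+u_{2n}}, …, max{u_{n,n-1}+u_{1,n-1}, u_{n-1,n-2}+u_{n-1,n}}, max{∑_{i=1}^{n-1}u_{in}, ∑_{i=1}^{n-1}u_{ni}} ), i.e., the maximum over the Betti elements of the maximum of the lengths of their two factorizations. -/

import Mathlib

/-- `σ` : the cycle `(1 2 ⋯ n−1)` in 0-based indexing on `{0,…,n-2}`. -/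
def ntSig (n i : ℕ) : ℕ := if i = n - 2 then 0 else i + 1

/-- `σ⁻¹` in 0-based indexing on `{0,…,n-2}`. -/
def ntTau (n i : ℕ) : ℕ := if i = 0 then n - 2 else i - 1

/-- The factorization homomorphism `(v_1,…,v_n) ↦ ∑ v_i • a_i`. -/
def ntDeg {G : Type*} [AddCommGroup G] (n : ℕ) (a : Fin n → G) : (Fin n → ℕ) →+ G where
  toFun v := ∑ i, v i • a i
  map_zero' := by simp
  map_add' v w := by simp [add_smul, Finset.sum_add_distrib]

/-- The defining relations of a Northcott type monoid: the two factorizations of each Betti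
element, i.e. the two sides of the binomials `f_1,…,f_{n-1}` and `D` (0-based indices). -/
def ntRel (n : ℕ) (hn : 3 ≤ n) (u : ℕ → ℕ → ℕ) (v w : Fin n → ℕ) : Prop :=
  (∃ i : Fin (n - 1),
    v = Pi.single (⟨(i : ℕ), by have := i.isLt; omega⟩ : Fin n)
          (u (n - 1) i + u (ntSig n i) i) ∧
    w = Pi.single (⟨ntTau n i, by have := i.isLt; unfold ntTau; split <;> omega⟩ : Fin n)
          (u i (ntTau n i))
        + Pi.single (⟨n - 1, by omega⟩ : Fin n) (u i (n - 1)))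
  ∨ (v = (fun j : Fin n => if (j : ℕ) < n - 1 then u (n - 1) j else 0) ∧
      w = Pi.single (⟨n - 1, by omega⟩ : Fin n) (∑ i : Fin (n - 1), u (i : ℕ) (n - 1)))

/-- Positivity of the relevant exponents `u_{ij} > 0`. -/
def ntPos (n : ℕ) (u : ℕ → ℕ → ℕ) : Prop :=
  ∀ i, i < n - 1 → 0 < u (n - 1) i ∧ 0 < u i (n - 1) ∧ 0 < u i (ntTau n i) ∧ 0 < u (ntSig n i) i

/-- The distance between two factorizations. -/
def ntDist {n : ℕ} (v w : Fin n → ℕ) : ℕ :=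
  max (∑ i, (v i - min (v i) (w i))) (∑ i, (w i - min (v i) (w i)))


/-!
Upper bound: the kernel congruence of `ntDeg n a` is generated by the binomials, so two
factorizations of the same element are joined by elementary moves `b + p ↦ b + q`, where `p`, `q`
are the two sides of a binomial, and such a move has distance at most `max (|p|, |q|)`.

Lower bound: because all the exponents `u_{ij}` are positive, no side of a binomial lies below
a side of a different binomial. Hence the only move applicable to a side of a binomial is that
binomial itself, every Betti element has exactly its two factorizations, and these have disjoint
supports; so any chain between them has a step of length `max (|p|, |q|)`.
-/

open Relation

section Chains

variable {α : Type*} {r : α → α → Prop}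

theorem Relation.ReflTransGen.exists_fin_chain {x y : α} (h : ReflTransGen r x y) :
    ∃ (k : ℕ) (ch : Fin (k + 1) → α), ch 0 = x ∧ ch (Fin.last k) = y ∧
      ∀ j : Fin k, r (ch j.castSucc) (ch j.succ) := by
  induction h with
  | refl => exact ⟨0, fun _ => x, rfl, rfl, Fin.elim0⟩
  | @tail y z _ hyz ih =>
    obtain ⟨k, ch, h0, hk, hstep⟩ := ih
    refine ⟨k + 1, Fin.snoc ch z, ?_, by simp, fun j => ?_⟩
    · rw [← Fin.castSucc_zero, Fin.snoc_castSucc, h0]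
    cases j using Fin.lastCases with
    | last => simpa [Fin.succ_last, hk] using hyz
    | cast j =>
      rw [Fin.succ_castSucc, Fin.snoc_castSucc, Fin.snoc_castSucc]
      exact hstep j

theorem reflTransGen_of_fin_chain {k : ℕ} {ch : Fin (k + 1) → α}
    (hstep : ∀ j : Fin k, r (ch j.castSucc) (ch j.succ)) (j : Fin (k + 1)) :
    ReflTransGen r (ch 0) (ch j) := by
  induction j using Fin.induction with
  | zero => exact .refl
  | succ j ih => exact ih.tail (hstep j)

theorem Fin.exists_castSucc_and_not_succ {k : ℕ} {P : Fin (k + 1) → Prop} (h0 : P 0)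
    (hk : ¬ P (Fin.last k)) : ∃ j : Fin k, P j.castSucc ∧ ¬ P j.succ := by
  by_contra! h
  exact hk (Fin.induction h0 h (Fin.last k))

end Chains

section ElementaryMove

variable {M : Type*} [AddCommMonoid M] (R : M → M → Prop)

def ElementaryMove (x y : M) : Prop :=
  ∃ b p q, SymmGen R p q ∧ x = b + p ∧ y = b + q

variable {R}

theorem ElementaryMove.of_rel {x y : M} (h : R x y) : ElementaryMove R x y :=
  ⟨0, x, y, .of_rel h, (zero_add x).symm, (zero_add y).symm⟩

theorem ElementaryMove.symm {x y : M} (h : ElementaryMove R x y) : ElementaryMove R y x :=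
  let ⟨b, p, q, hpq, hx, hy⟩ := h
  ⟨b, q, p, hpq.symm, hy, hx⟩

instance : Std.Symm (ElementaryMove R) := ⟨fun _ _ => ElementaryMove.symm⟩

theorem ElementaryMove.add_right {x y : M} (c : M) (h : ElementaryMove R x y) :
    ElementaryMove R (x + c) (y + c) :=
  let ⟨b, p, q, hpq, hx, hy⟩ := h
  ⟨b + c, p, q, hpq, by rw [hx, add_right_comm], by rw [hy, add_right_comm]⟩

variable (R) in
def elementaryMoveCon : AddCon M where
  r := ReflTransGen (ElementaryMove R)
  iseqv := ⟨fun _ => .refl, fun h => symm h, .trans⟩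
  add' {w x y z} hwx hyz := by
    have h1 : ReflTransGen (ElementaryMove R) (w + y) (x + y) :=
      hwx.lift (· + y) fun _ _ => ElementaryMove.add_right y
    have h2 : ReflTransGen (ElementaryMove R) (x + y) (x + z) := by
      simpa only [add_comm x] using hyz.lift (· + x) fun _ _ => ElementaryMove.add_right x
    exact h1.trans h2

theorem addConGen_iff_reflTransGen {x y : M} :
    addConGen R x y ↔ ReflTransGen (ElementaryMove R) x y := by
  refine ⟨fun h => (AddCon.addConGen_le (c := elementaryMoveCon R)).2
    (fun p q hpq => .single (.of_rel hpq)) h, fun h => ?_⟩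
  induction h with
  | refl => exact (addConGen R).refl x
  | tail _ hmove ih =>
    obtain ⟨b, p, q, hpq, rfl, rfl⟩ := hmove
    have hpq' : addConGen R p q := hpq.elim (.of p q) fun h => .symm (.of q p h)
    exact (addConGen R).trans ih ((addConGen R).add ((addConGen R).refl b) hpq')

theorem eq_iff_reflTransGen_of_ker_eq {N : Type*} [AddZeroClass N] {f : M →+ N}
    (hker : AddCon.ker f = addConGen R) {x y : M} :
    f x = f y ↔ ReflTransGen (ElementaryMove R) x y := by
  rw [← AddCon.ker_rel, hker, addConGen_iff_reflTransGen]

theorem eq_or_eq_of_reflTransGen_elementaryMove [PartialOrder M] [CanonicallyOrderedAdd M]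
    [IsCancelAdd M] (hiso : ∀ ⦃p q s t⦄, SymmGen R p q → SymmGen R s t → p ≤ s → p = s ∧ q = t)
    {v w z : M} (hvw : R v w) (h : ReflTransGen (ElementaryMove R) v z) : z = v ∨ z = w := by
  induction h with
  | refl => exact .inl rfl
  | tail _ hmove ih =>
    obtain ⟨b, p, q, hpq, rfl, rfl⟩ := hmove
    obtain ⟨t, hst, ht⟩ : ∃ t, SymmGen R (b + p) t ∧ (t = v ∨ t = w) := by
      rcases ih with h | h <;> rw [h]
      · exact ⟨w, .of_rel hvw, .inr rfl⟩
      · exact ⟨v, .of_rel_symm hvw, .inl rfl⟩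
    obtain ⟨hp, rfl⟩ := hiso hpq hst le_add_self
    have hb : b = 0 := by simpa using hp
    rwa [hb, zero_add]

end ElementaryMove

theorem exists_lt_ne_of_two_le {k : ℕ} (hk : 2 ≤ k) (m : ℕ) : ∃ c < k, c ≠ m :=
  ⟨if m = 0 then 1 else 0, by split_ifs <;> omega, by split_ifs <;> omega⟩

section Northcott

variable {n : ℕ}

theorem ntTau_lt {i : ℕ} (hi : i < n - 1) : ntTau n i < n - 1 := by
  unfold ntTau; split <;> omega

theorem ntTau_ne (hn : 3 ≤ n) (i : ℕ) : ntTau n i ≠ i := by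
  unfold ntTau; split <;> omega

theorem ntSig_ntTau {i : ℕ} (hi : i < n - 1) : ntSig n (ntTau n i) = i := by
  unfold ntSig ntTau; split_ifs <;> omega

theorem eq_of_ntTau_eq {i j : ℕ} (hi : i < n - 1) (hj : j < n - 1) (h : ntTau n i = ntTau n j) :
    i = j := by
  rw [← ntSig_ntTau hi, ← ntSig_ntTau hj, h]

variable (u : ℕ → ℕ → ℕ)

/- `ntFLeft u i` and `ntFRight u i` are the two monomials of the binomial `f_i`, `ntDLeft u` and
`ntDRight u hn` those of `D`. -/

def ntFLeft (i : Fin (n - 1)) : Fin n → ℕ :=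
  Pi.single ⟨i, by have := i.isLt; omega⟩ (u (n - 1) i + u (ntSig n i) i)

def ntFRight (i : Fin (n - 1)) : Fin n → ℕ :=
  Pi.single ⟨ntTau n i, by have := ntTau_lt i.isLt; omega⟩ (u i (ntTau n i))
    + Pi.single ⟨n - 1, by have := i.isLt; omega⟩ (u i (n - 1))

def ntDLeft : Fin n → ℕ := fun j => if (j : ℕ) < n - 1 then u (n - 1) j else 0

def ntDRight (hn : 3 ≤ n) : Fin n → ℕ :=
  Pi.single ⟨n - 1, by omega⟩ (∑ i : Fin (n - 1), u i (n - 1))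

variable {u}

theorem ntPos.lt_sum (hu : ntPos n u) (hn : 3 ≤ n) (i : Fin (n - 1)) :
    u i (n - 1) < ∑ j : Fin (n - 1), u j (n - 1) := by
  obtain ⟨c, hc, hci⟩ := exists_lt_ne_of_two_le (by omega : 2 ≤ n - 1) i
  exact Finset.single_lt_sum (f := fun j : Fin (n - 1) => u j (n - 1)) (j := ⟨c, hc⟩)
    (Fin.ne_of_val_ne hci) (Finset.mem_univ _) (Finset.mem_univ _) (hu c hc).2.1
    fun _ _ _ => Nat.zero_le _

theorem ntRel_iff {hn : 3 ≤ n} {p q : Fin n → ℕ} :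
    ntRel n hn u p q ↔
      (∃ i, p = ntFLeft u i ∧ q = ntFRight u i) ∨ (p = ntDLeft u ∧ q = ntDRight u hn) :=
  Iff.rfl

theorem ntFLeft_apply (i : Fin (n - 1)) (j : Fin n) :
    ntFLeft u i j = if (j : ℕ) = i then u (n - 1) i + u (ntSig n i) i else 0 := by
  simp [ntFLeft, Pi.single_apply, Fin.ext_iff]

theorem ntFRight_apply (i : Fin (n - 1)) (j : Fin n) :
    ntFRight u i j = (if (j : ℕ) = ntTau n i then u i (ntTau n i) else 0)
      + if (j : ℕ) = n - 1 then u i (n - 1) else 0 := by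
  simp [ntFRight, Pi.single_apply, Fin.ext_iff]

theorem ntDRight_apply (hn : 3 ≤ n) (j : Fin n) :
    ntDRight u hn j = if (j : ℕ) = n - 1 then ∑ i : Fin (n - 1), u i (n - 1) else 0 := by
  simp [ntDRight, Pi.single_apply, Fin.ext_iff]

theorem sum_ntFLeft (i : Fin (n - 1)) :
    ∑ j, ntFLeft u i j = u (n - 1) i + u (ntSig n i) i := by
  simp [ntFLeft]

theorem sum_ntFRight (i : Fin (n - 1)) :
    ∑ j, ntFRight u i j = u i (ntTau n i) + u i (n - 1) := by
  simp [ntFRight, Finset.sum_add_distrib]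

theorem sum_ntDLeft : ∑ j : Fin n, ntDLeft u j = ∑ i : Fin (n - 1), u (n - 1) i := by
  cases n with
  | zero => rfl
  | succ m => simp [ntDLeft, Fin.sum_univ_castSucc]

theorem sum_ntDRight (hn : 3 ≤ n) :
    ∑ j, ntDRight u hn j = ∑ i : Fin (n - 1), u i (n - 1) := by
  simp [ntDRight]

variable (n u) in
def ntCatenaryBound : ℕ :=
  max (Finset.univ.sup fun i : Fin (n - 1) =>
      max (u (n - 1) i + u (ntSig n i) i) (u i (ntTau n i) + u i (n - 1)))
    (max (∑ i : Fin (n - 1), u (i : ℕ) (n - 1)) (∑ i : Fin (n - 1), u (n - 1) i))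

theorem ntCatenaryBound_le_iff (hn : 3 ≤ n) {N : ℕ} :
    ntCatenaryBound n u ≤ N ↔ ∀ p q, ntRel n hn u p q → max (∑ j, p j) (∑ j, q j) ≤ N := by
  simp only [ntRel_iff, or_imp, exists_imp, and_imp, forall_and]
  simp only [ntCatenaryBound, sup_le_iff, Finset.sup_le_iff, Finset.mem_univ, forall_const,
    forall_eq_apply_imp_iff, forall_eq, sum_ntDLeft, sum_ntDRight]
  refine and_congr ⟨fun h _ _ i hp hq => ?_, fun h i => ?_⟩ and_comm
  · rw [hp, hq, sum_ntFLeft, sum_ntFRight]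
    exact h i
  · simpa only [sum_ntFLeft, sum_ntFRight] using h _ _ i rfl rfl

theorem ntDist_add_add_le (b p q : Fin n → ℕ) :
    ntDist (b + p) (b + q) ≤ max (∑ j, p j) (∑ j, q j) := by
  unfold ntDist
  gcongr with j <;> simp only [Pi.add_apply] <;> omega

theorem ntDist_eq_of_disjoint {v w : Fin n → ℕ} (h : ∀ j, v j = 0 ∨ w j = 0) :
    ntDist v w = max (∑ j, v j) (∑ j, w j) := by
  unfold ntDist
  congr 1 <;> refine Finset.sum_congr rfl fun j _ => ?_ <;> rcases h j with h | h <;> simp [h]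

variable {hn : 3 ≤ n}

theorem ntRel.disjoint {v w : Fin n → ℕ} (h : ntRel n hn u v w) (j : Fin n) :
    v j = 0 ∨ w j = 0 := by
  rcases ntRel_iff.1 h with ⟨i, rfl, rfl⟩ | ⟨rfl, rfl⟩
  · by_cases hj : (j : ℕ) = i
    · right
      simp [ntFRight_apply, hj, (ntTau_ne hn i).symm, i.isLt.ne]
    · simp [ntFLeft_apply, hj]
  · by_cases hj : (j : ℕ) < n - 1
    · simp [ntDRight_apply, hj.ne]
    · simp [ntDLeft, hj]

theorem ntRel.ntDist_eq {v w : Fin n → ℕ} (h : ntRel n hn u v w) :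
    ntDist v w = max (∑ j, v j) (∑ j, w j) :=
  ntDist_eq_of_disjoint h.disjoint

theorem ntRel.ne (hu : ntPos n u) {v w : Fin n → ℕ} (h : ntRel n hn u v w) : v ≠ w := by
  rintro rfl
  have hzero (j : Fin n) : v j = 0 := (h.disjoint j).elim id id
  rcases ntRel_iff.1 h with ⟨i, rfl, -⟩ | ⟨rfl, -⟩
  · have hi := hzero ⟨i, by omega⟩
    simp only [ntFLeft_apply, if_true, Nat.add_eq_zero_iff] at hi
    exact (hu i i.isLt).1.ne' hi.1
  · exact (hu 0 (by omega)).1.ne'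
      (by simpa [ntDLeft, show 0 < n - 1 by omega] using hzero ⟨0, by omega⟩)

theorem ntDist_le_of_elementaryMove {x y : Fin n → ℕ} (h : ElementaryMove (ntRel n hn u) x y) :
    ntDist x y ≤ ntCatenaryBound n u := by
  obtain ⟨b, p, q, hpq, rfl, rfl⟩ := h
  refine (ntDist_add_add_le b p q).trans ?_
  rcases hpq with hpq | hqp
  · exact (ntCatenaryBound_le_iff hn).1 le_rfl p q hpq
  · exact max_comm (∑ j, p j) _ ▸ (ntCatenaryBound_le_iff hn).1 le_rfl q p hqp

variable {s t : Fin n → ℕ}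

theorem eq_of_ntFLeft_le (hu : ntPos n u) {j : Fin (n - 1)}
    (hst : SymmGen (ntRel n hn u) s t) (h : ntFLeft u j ≤ s) :
    ntFLeft u j = s ∧ ntFRight u j = t := by
  have hj := h ⟨j, by omega⟩
  have hpos := hu j j.isLt
  simp only [ntFLeft_apply, if_true] at hj
  obtain (⟨i, rfl, rfl⟩ | ⟨rfl, rfl⟩) | (⟨i, rfl, rfl⟩ | ⟨rfl, rfl⟩) :=
    hst.imp ntRel_iff.1 ntRel_iff.1
  · by_cases hji : (j : ℕ) = i
    · obtain rfl := Fin.ext hji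
      exact ⟨rfl, rfl⟩
    · rw [ntFLeft_apply, if_neg hji] at hj
      omega
  · simp only [ntDLeft, j.isLt, if_true] at hj
    omega
  · have hjn : (j : ℕ) ≠ n - 1 := by omega
    by_cases hji : (j : ℕ) = ntTau n i
    · have := (hu _ (ntTau_lt i.isLt)).1
      simp only [ntFRight_apply, hji, ntSig_ntTau i.isLt, (ntTau_lt i.isLt).ne, if_true,
        if_false, add_zero] at hj
      omega
    · rw [ntFRight_apply, if_neg hji, if_neg hjn] at hj
      omega
  · rw [ntDRight_apply, if_neg (show (j : ℕ) ≠ n - 1 by omega)] at hj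
    omega

theorem eq_of_ntFRight_le (hu : ntPos n u) {j : Fin (n - 1)}
    (hst : SymmGen (ntRel n hn u) s t) (h : ntFRight u j ≤ s) :
    ntFRight u j = s ∧ ntFLeft u j = t := by
  have hτ : ntTau n j < n - 1 := ntTau_lt j.isLt
  have hjτ := h ⟨ntTau n j, by omega⟩
  have hjlast := h ⟨n - 1, by omega⟩
  have hpos := hu j j.isLt
  simp only [ntFRight_apply, hτ.ne, hτ.ne', if_true, if_false, add_zero,
    zero_add] at hjτ hjlast
  obtain (⟨i, rfl, rfl⟩ | ⟨rfl, rfl⟩) | (⟨i, rfl, rfl⟩ | ⟨rfl, rfl⟩) :=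
    hst.imp ntRel_iff.1 ntRel_iff.1
  · rw [ntFLeft_apply, if_neg (show n - 1 ≠ (i : ℕ) by omega)] at hjlast
    omega
  · simp only [ntDLeft, lt_irrefl, if_false] at hjlast
    omega
  · by_cases hji : ntTau n j = ntTau n i
    · obtain rfl := Fin.ext (eq_of_ntTau_eq j.isLt i.isLt hji)
      exact ⟨rfl, rfl⟩
    · rw [ntFRight_apply, if_neg hji, if_neg hτ.ne] at hjτ
      omega
  · rw [ntDRight_apply, if_neg hτ.ne] at hjτ
    omega

theorem eq_of_ntDLeft_le (hu : ntPos n u) (hst : SymmGen (ntRel n hn u) s t)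
    (h : ntDLeft u ≤ s) : ntDLeft u = s ∧ ntDRight u hn = t := by
  have hDLeft {c : ℕ} (hc : c < n - 1) : 0 < s ⟨c, by omega⟩ :=
    (hu c hc).1.trans_le (by simpa [ntDLeft, hc] using h ⟨c, by omega⟩)
  obtain (⟨i, rfl, rfl⟩ | ⟨rfl, rfl⟩) | (⟨i, rfl, rfl⟩ | ⟨rfl, rfl⟩) :=
    hst.imp ntRel_iff.1 ntRel_iff.1
  · obtain ⟨c, hc, hci⟩ := exists_lt_ne_of_two_le (by omega : 2 ≤ n - 1) i
    simpa [ntFLeft_apply, hci] using hDLeft hc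
  · exact ⟨rfl, rfl⟩
  · obtain ⟨c, hc, hci⟩ := exists_lt_ne_of_two_le (by omega : 2 ≤ n - 1) (ntTau n i)
    simpa [ntFRight_apply, hci, hc.ne] using hDLeft hc
  · simpa [ntDRight_apply, show 0 ≠ n - 1 by omega] using hDLeft (c := 0) (by omega)

theorem eq_of_ntDRight_le (hu : ntPos n u) (hst : SymmGen (ntRel n hn u) s t)
    (h : ntDRight u hn ≤ s) : ntDRight u hn = s ∧ ntDLeft u = t := by
  have hlast := h ⟨n - 1, by omega⟩
  have hpos : 0 < ∑ j : Fin (n - 1), u j (n - 1) :=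
    (Nat.zero_le _).trans_lt (hu.lt_sum hn ⟨0, by omega⟩)
  simp only [ntDRight_apply, if_true] at hlast
  obtain (⟨i, rfl, rfl⟩ | ⟨rfl, rfl⟩) | (⟨i, rfl, rfl⟩ | ⟨rfl, rfl⟩) :=
    hst.imp ntRel_iff.1 ntRel_iff.1
  · rw [ntFLeft_apply, if_neg (show n - 1 ≠ (i : ℕ) by omega)] at hlast
    omega
  · simp only [ntDLeft, lt_irrefl, if_false] at hlast
    omega
  · have := hu.lt_sum hn i
    simp only [ntFRight_apply, (ntTau_lt i.isLt).ne', if_true, if_false, zero_add] at hlast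
    omega
  · exact ⟨rfl, rfl⟩

theorem ntRel_isolated (hu : ntPos n u) {p q : Fin n → ℕ} (hpq : SymmGen (ntRel n hn u) p q)
    (hst : SymmGen (ntRel n hn u) s t) (h : p ≤ s) : p = s ∧ q = t := by
  obtain (⟨i, rfl, rfl⟩ | ⟨rfl, rfl⟩) | (⟨i, rfl, rfl⟩ | ⟨rfl, rfl⟩) :=
    hpq.imp ntRel_iff.1 ntRel_iff.1
  · exact eq_of_ntFLeft_le hu hst h
  · exact eq_of_ntDLeft_le hu hst h
  · exact eq_of_ntFRight_le hu hst h
  · exact eq_of_ntDRight_le hu hst h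

end Northcott

/-- the catenary degree of a monoid of Northcott type is the maximum, over the
Betti elements, of the maximum of the lengths of their two factorizations, namely
`max(max{u_{ni}+u_{σ(i),i}, u_{i,σ⁻¹(i)}+u_{in}}_i, max{∑u_{in}, ∑u_{ni}})`. -/
theorem northcott_catenary_degree {G : Type*} [AddCommGroup G] (n : ℕ) (hn : 3 ≤ n)
    (u : ℕ → ℕ → ℕ) (hu : ntPos n u) (a : Fin n → G)
    (hker : AddCon.ker (ntDeg n a) = addConGen (ntRel n hn u)) :
    IsLeast {N : ℕ | ∀ (s : G) (v w : Fin n → ℕ), ntDeg n a v = s → ntDeg n a w = s →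
        ∃ (k : ℕ) (ch : Fin (k + 1) → Fin n → ℕ), ch 0 = v ∧ ch (Fin.last k) = w ∧
          (∀ j, ntDeg n a (ch j) = s) ∧
          ∀ j : Fin k, ntDist (ch j.castSucc) (ch j.succ) ≤ N}
      (max (Finset.univ.sup fun i : Fin (n - 1) =>
          max (u (n - 1) i + u (ntSig n i) i) (u i (ntTau n i) + u i (n - 1)))
        (max (∑ i : Fin (n - 1), u (i : ℕ) (n - 1))
          (∑ i : Fin (n - 1), u (n - 1) i))) := by
  change IsLeast _ (ntCatenaryBound n u)
  have hdeg {x y : Fin n → ℕ} := eq_iff_reflTransGen_of_ker_eq hker (x := x) (y := y)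
  refine ⟨fun s v w hv hw => ?_, fun N hN => (ntCatenaryBound_le_iff hn).2 fun v w hvw => ?_⟩
  · obtain ⟨k, ch, h0, hk, hstep⟩ := (hdeg.1 (hv.trans hw.symm)).exists_fin_chain
    refine ⟨k, ch, h0, hk, fun j => ?_, fun j => ntDist_le_of_elementaryMove (hstep j)⟩
    rw [← hv, ← h0]
    exact (hdeg.2 (reflTransGen_of_fin_chain hstep j)).symm
  · obtain ⟨k, ch, h0, hk, hch, hdist⟩ :=
      hN _ v w rfl (hdeg.2 (.single (.of_rel hvw))).symm
    have hmem (j : Fin (k + 1)) : ch j = v ∨ ch j = w :=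
      eq_or_eq_of_reflTransGen_elementaryMove (fun _ _ _ _ => ntRel_isolated hu) hvw
        (hdeg.1 (hch j).symm)
    obtain ⟨j, hj, hj'⟩ := Fin.exists_castSucc_and_not_succ (P := fun j => ch j = v) h0
      (hk ▸ (hvw.ne hu).symm)
    rw [← hvw.ntDist_eq, ← hj, ← (hmem j.succ).resolve_left hj']
    exact hdist j
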